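/- A finitely supported idempotent probability measure has a unique representation: if max_{1≤i≤n}(λ_i + φ(x_i)) = max_{1≤j≤m}(κ_j + φ(y_j)) for all φ ∈ C(X, ℝ), where x_1, …, x_n ∈ X are pairwise distinct, y_1, …, y_m ∈ X are pairwise distinct, and max_i λ_i = max_j κ_j = 0, then n = m and the sets of pairs coincide: {(x_i, λ_i) : 1 ≤ i ≤ n} = {(y_j, κ_j) : 1 ≤ j ≤ m}. -/
import Mathlib


open Filter Topology

variable {X : Type*}

/-- An idempotent probability measure on a topological space `X`:
a functional on `C(X, ℝ)` preserving constants, shifting by constants,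
and turning pointwise max into max. -/
def IsIPM [TopologicalSpace X] (μ : C(X, ℝ) → ℝ) : Prop :=
  (∀ c : ℝ, μ (ContinuousMap.const X c) = c) ∧
  (∀ (φ : C(X, ℝ)) (c : ℝ), μ (φ + ContinuousMap.const X c) = μ φ + c) ∧
  (∀ φ ψ : C(X, ℝ), μ (φ ⊔ ψ) = max (μ φ) (μ ψ))

/-- `μ` is represented as `μ(φ) = max_i (λ i + φ (x i))` with `x` pairwise distinct
and `max_i λ i = 0`. -/
def IsRepr [TopologicalSpace X] (μ : C(X, ℝ) → ℝ) {n : ℕ}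
    (x : Fin n → X) (lam : Fin n → ℝ) : Prop :=
  0 < n ∧ Function.Injective x ∧ (⨆ i, lam i) = 0 ∧
    ∀ φ : C(X, ℝ), μ φ = ⨆ i, (lam i + φ (x i))

/-- A finitely supported idempotent probability measure. -/
def IsFinSuppIPM [TopologicalSpace X] (μ : C(X, ℝ) → ℝ) : Prop :=
  ∃ (n : ℕ) (x : Fin n → X) (lam : Fin n → ℝ), IsRepr μ x lam

/-- `ξ` is a coupling of `μ1` and `μ2`: an idempotent probability measure on `X × X`
whose marginals are `μ1` and `μ2`. -/
def IsCoupling [TopologicalSpace X] (μ1 μ2 : C(X, ℝ) → ℝ)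
    (ξ : C(X × X, ℝ) → ℝ) : Prop :=
  IsIPM ξ ∧
  (∀ φ : C(X, ℝ), ξ (φ.comp ContinuousMap.fst) = μ1 φ) ∧
  (∀ φ : C(X, ℝ), ξ (φ.comp ContinuousMap.snd) = μ2 φ)

/-- A coupling matrix for weight vectors `lam1`, `lam2`: entries in `ℝ ∪ {−∞}`,
with row maxima `lam1` and column maxima `lam2`. -/
def IsCouplingMatrix {n1 n2 : ℕ} (lam1 : Fin n1 → ℝ) (lam2 : Fin n2 → ℝ)
    (γ : Fin n1 → Fin n2 → WithBot ℝ) : Prop :=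
  (∀ j, (Finset.univ.sup fun k => γ j k) = (lam1 j : WithBot ℝ)) ∧
  (∀ k, (Finset.univ.sup fun j => γ j k) = (lam2 k : WithBot ℝ))

/-- The cost `max{ |λ_{2k} − λ_{1j}| + ρ(x_{1j}, x_{2k}) : γ_{jk} ≠ −∞ }`. -/
noncomputable def matCost [MetricSpace X] {n1 n2 : ℕ}
    (x1 : Fin n1 → X) (lam1 : Fin n1 → ℝ) (x2 : Fin n2 → X) (lam2 : Fin n2 → ℝ)
    (γ : Fin n1 → Fin n2 → WithBot ℝ) : ℝ :=
  sSup {c : ℝ | ∃ j k, γ j k ≠ ⊥ ∧ c = |lam2 k - lam1 j| + dist (x1 j) (x2 k)}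

/-- `H(μ1, μ2)`: the infimum of costs over all coupling matrices
(for all representations of `μ1`, `μ2`; the representation is unique). -/
noncomputable def Hdist [MetricSpace X] (μ1 μ2 : C(X, ℝ) → ℝ) : ℝ :=
  sInf {c : ℝ | ∃ (n1 n2 : ℕ) (x1 : Fin n1 → X) (lam1 : Fin n1 → ℝ)
      (x2 : Fin n2 → X) (lam2 : Fin n2 → ℝ) (γ : Fin n1 → Fin n2 → WithBot ℝ),
      IsRepr μ1 x1 lam1 ∧ IsRepr μ2 x2 lam2 ∧ IsCouplingMatrix lam1 lam2 γ ∧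
      c = matCost x1 lam1 x2 lam2 γ}

/-- `ρ_ω(μ1, μ2) = min{diam X, H(μ1, μ2)}`. -/
noncomputable def rhoOmega [MetricSpace X] (μ1 μ2 : C(X, ℝ) → ℝ) : ℝ :=
  min (Metric.diam (Set.univ : Set X)) (Hdist μ1 μ2)

lemma key19 [MetricSpace X] {n m : ℕ}
    (x : Fin n → X) (lam : Fin n → ℝ) (y : Fin m → X) (kap : Fin m → ℝ)
    (hn : 0 < n) (hm : 0 < m)
    (hx : Function.Injective x)
    (hlam : (⨆ i, lam i) = 0) (hkap : (⨆ j, kap j) = 0)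
    (h : ∀ φ : C(X, ℝ), (⨆ i, (lam i + φ (x i))) = ⨆ j, (kap j + φ (y j)))
    (i : Fin n) : ∃ j, y j = x i ∧ kap j = lam i := by
  haveI : Nonempty (Fin n) := Fin.pos_iff_nonempty.mp hn
  haveI : Nonempty (Fin m) := Fin.pos_iff_nonempty.mp hm
  have hbl : ∀ i', lam i' ≤ 0 := fun i' =>
    hlam ▸ le_ciSup (Set.Finite.bddAbove (Set.finite_range lam)) i'
  have hbk : ∀ j, kap j ≤ 0 := fun j =>
    hkap ▸ le_ciSup (Set.Finite.bddAbove (Set.finite_range kap)) j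
  set A : ℝ := Finset.univ.inf' Finset.univ_nonempty lam with hAdef
  have hA : ∀ i', A ≤ lam i' := fun i' => Finset.inf'_le _ (Finset.mem_univ _)
  set s : Finset ℝ := insert 1
    (((Finset.univ.image fun i' => dist (x i') (x i)) ∪
      (Finset.univ.image fun j => dist (y j) (x i))).filter fun d => 0 < d) with hsdef
  have hs : s.Nonempty := ⟨1, Finset.mem_insert_self _ _⟩
  set δ : ℝ := s.min' hs with hδdef
  have hδpos : 0 < δ := by
    have hmem := Finset.min'_mem s hs
    rcases Finset.mem_insert.mp hmem with h1 | h2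
    · rw [hδdef, h1]; norm_num
    · exact (Finset.mem_filter.mp h2).2
  have hδx : ∀ i', x i' ≠ x i → δ ≤ dist (x i') (x i) := by
    intro i' hne
    apply Finset.min'_le
    refine Finset.mem_insert_of_mem (Finset.mem_filter.mpr ⟨?_, dist_pos.mpr hne⟩)
    exact Finset.mem_union_left _ (Finset.mem_image.mpr ⟨i', Finset.mem_univ _, rfl⟩)
  have hδy : ∀ j, y j ≠ x i → δ ≤ dist (y j) (x i) := by
    intro j hne
    apply Finset.min'_le
    refine Finset.mem_insert_of_mem (Finset.mem_filter.mpr ⟨?_, dist_pos.mpr hne⟩)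
    exact Finset.mem_union_right _ (Finset.mem_image.mpr ⟨j, Finset.mem_univ _, rfl⟩)
  have hA0 : A ≤ 0 := le_trans (hA i) (hbl i)
  set C : ℝ := (1 - A) / δ with hCdef
  have hCδ : C * δ = 1 - A := div_mul_cancel₀ _ (ne_of_gt hδpos)
  have hC0 : 0 ≤ C := div_nonneg (by linarith) hδpos.le
  set φ : C(X, ℝ) := ⟨fun t => -(C * dist t (x i)), by fun_prop⟩ with hφdef
  have hφ : ∀ t, φ t = -(C * dist t (x i)) := fun t => rfl
  have hterm : ∀ i', lam i' + φ (x i') ≤ lam i := by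
    intro i'
    by_cases hc : x i' = x i
    · have : i' = i := hx hc
      subst this
      simp [hφ, dist_self]
    · have hd : δ ≤ dist (x i') (x i) := hδx i' hc
      have h2 : C * δ ≤ C * dist (x i') (x i) := mul_le_mul_of_nonneg_left hd hC0
      have := hbl i'
      have := hA i
      rw [hφ]
      linarith
  have hLHS : (⨆ i', lam i' + φ (x i')) = lam i := by
    refine le_antisymm (ciSup_le hterm) ?_
    have := le_ciSup (Set.Finite.bddAbove (Set.finite_range fun i' => lam i' + φ (x i'))) i
    simpa [hφ, dist_self] using this
  obtain ⟨j0, hj0⟩ := Finite.exists_max fun j => kap j + φ (y j)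
  have hsup : (⨆ j, kap j + φ (y j)) = kap j0 + φ (y j0) :=
    le_antisymm (ciSup_le hj0)
      (le_ciSup (Set.Finite.bddAbove (Set.finite_range fun j => kap j + φ (y j))) j0)
  have heq : kap j0 + φ (y j0) = lam i := by rw [← hsup, ← h φ, hLHS]
  by_cases hc : y j0 = x i
  · refine ⟨j0, hc, ?_⟩
    rw [hφ, hc] at heq
    simpa [dist_self] using heq
  · exfalso
    have hd : δ ≤ dist (y j0) (x i) := hδy j0 hc
    have h2 : C * δ ≤ C * dist (y j0) (x i) := mul_le_mul_of_nonneg_left hd hC0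
    have := hbk j0
    have := hA i
    rw [hφ] at heq
    linarith

/-- uniqueness of the representation of a finitely supported
idempotent probability measure. -/
theorem stmt19 [MetricSpace X] [CompactSpace X] {n m : ℕ}
    (x : Fin n → X) (lam : Fin n → ℝ) (y : Fin m → X) (kap : Fin m → ℝ)
    (hn : 0 < n) (hm : 0 < m)
    (hx : Function.Injective x) (hy : Function.Injective y)
    (hlam : (⨆ i, lam i) = 0) (hkap : (⨆ j, kap j) = 0)
    (h : ∀ φ : C(X, ℝ), (⨆ i, (lam i + φ (x i))) = ⨆ j, (kap j + φ (y j))) :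
    n = m ∧
      {p : X × ℝ | ∃ i, p = (x i, lam i)} = {p : X × ℝ | ∃ j, p = (y j, kap j)} := by
  have hfwd : ∀ i, ∃ j, y j = x i ∧ kap j = lam i :=
    key19 x lam y kap hn hm hx hlam hkap h
  have hbwd : ∀ j, ∃ i, x i = y j ∧ lam i = kap j :=
    key19 y kap x lam hm hn hy hkap hlam (fun φ => (h φ).symm)
  constructor
  · have h1 : n ≤ m := by
      have : Function.Injective fun i => (hfwd i).choose := by
        intro i1 i2 he
        apply hx
        have e1 := (hfwd i1).choose_spec.1
        have e2 := (hfwd i2).choose_spec.1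
        rw [← e1, ← e2]; exact congrArg y he
      simpa using Fintype.card_le_of_injective _ this
    have h2 : m ≤ n := by
      have : Function.Injective fun j => (hbwd j).choose := by
        intro j1 j2 he
        apply hy
        have e1 := (hbwd j1).choose_spec.1
        have e2 := (hbwd j2).choose_spec.1
        rw [← e1, ← e2]; exact congrArg x he
      simpa using Fintype.card_le_of_injective _ this
    omega
  · ext p
    constructor
    · rintro ⟨i, rfl⟩
      obtain ⟨j, hj1, hj2⟩ := hfwd i
      exact ⟨j, by rw [hj1, hj2]⟩
    · rintro ⟨j, rfl⟩
      obtain ⟨i, hi1, hi2⟩ := hbwd j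
      exact ⟨i, by rw [hi1, hi2]⟩
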